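/- Let E be a finite-dimensional real inner product space, and let φ : E → ℝ be differentiable, strictly convex, and supercoercive (φ(x)/‖x‖ → ∞ as ‖x‖ → ∞). Then the gradient map ∇φ : E → E is a bijection, and for every y ∈ E the unique point x with ∇φ(x) = y is the unique maximizer of x ↦ ⟨y, x⟩ − φ(x) over E. -/

import Mathlib

/-!
Restricting `φ` to the line through `x` and `z` turns strict convexity into the strict gradient
inequality `⟪∇φ x, z - x⟫ < φ z - φ x`. It makes `∇φ` strictly monotone, hence injective, and shows
that a point with `∇φ x = y` is the strict global maximizer of `⟪y, ·⟫ - φ`. Conversely,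
supercoercivity makes `φ - ⟪y, ·⟫` tend to `+∞`, so in finite dimension it attains its minimum,
where its gradient `∇φ - y` vanishes.
-/

open scoped RealInnerProductSpace Gradient
open Filter Set Function

theorem StrictConvexOn.comp_affineMap {𝕜 E F β : Type*} [Field 𝕜] [LinearOrder 𝕜]
    [AddCommGroup E] [AddCommGroup F] [AddCommMonoid β] [PartialOrder β]
    [Module 𝕜 E] [Module 𝕜 F] [SMul 𝕜 β] {f : F → β} {s : Set F}
    (hf : StrictConvexOn 𝕜 s f) (g : E →ᵃ[𝕜] F) (hg : Injective g) :
    StrictConvexOn 𝕜 (g ⁻¹' s) (f ∘ g) :=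
  ⟨hf.1.affine_preimage g, fun x hx y hy hxy a b ha hb hab =>
    calc
      (f ∘ g) (a • x + b • y) = f (a • g x + b • g y) := by
        rw [comp_apply, Convex.combo_affine_apply hab]
      _ < a • f (g x) + b • f (g y) := hf.2 hx hy (hg.ne hxy) ha hb hab⟩

section Gradient

variable {E : Type*} [NormedAddCommGroup E] [InnerProductSpace ℝ E] [CompleteSpace E]
  {φ : E → ℝ}

theorem StrictConvexOn.inner_gradient_lt_sub {s : Set E} (hφ : StrictConvexOn ℝ s φ)
    {x z : E} (hx : x ∈ s) (hz : z ∈ s) (hxz : x ≠ z) (hdiff : DifferentiableAt ℝ φ x) :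
    ⟪∇ φ x, z - x⟫ < φ z - φ x := by
  have hline : HasDerivAt (φ ∘ (AffineMap.lineMap x z : ℝ → E)) ⟪∇ φ x, z - x⟫ 0 := by
    rw [← AffineMap.lineMap_apply_zero x z (k := ℝ)] at hdiff
    simpa using hdiff.hasGradientAt.hasFDerivAt.comp_hasDerivAt (0 : ℝ)
      AffineMap.hasDerivAt_lineMap
  have := (hφ.comp_affineMap _ (AffineMap.lineMap_injective ℝ hxz)).lt_slope_of_hasDerivAt
    (x := 0) (y := 1) (by simpa using hx) (by simpa using hz) one_pos hline
  simpa [slope_def_field] using this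

theorem StrictConvexOn.inner_gradient_sub_gradient_pos {s : Set E} (hφ : StrictConvexOn ℝ s φ)
    {x z : E} (hx : x ∈ s) (hz : z ∈ s) (hxz : x ≠ z) (hdx : DifferentiableAt ℝ φ x)
    (hdz : DifferentiableAt ℝ φ z) :
    0 < ⟪∇ φ x - ∇ φ z, x - z⟫ := by
  have h₁ := hφ.inner_gradient_lt_sub hx hz hxz hdx
  have h₂ := hφ.inner_gradient_lt_sub hz hx hxz.symm hdz
  rw [← neg_sub x z, inner_neg_right] at h₁
  rw [inner_sub_left]
  linarith

theorem StrictConvexOn.injective_gradient (hφ : StrictConvexOn ℝ univ φ)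
    (hdiff : Differentiable ℝ φ) : Injective (∇ φ) := by
  intro x z hxz
  by_contra hne
  simpa [hxz] using hφ.inner_gradient_sub_gradient_pos trivial trivial hne (hdiff x) (hdiff z)

theorem StrictConvexOn.inner_sub_lt_of_gradient_eq (hφ : StrictConvexOn ℝ univ φ)
    {x x' y : E} (hdiff : DifferentiableAt ℝ φ x) (hx : ∇ φ x = y) (hx' : x' ≠ x) :
    ⟪y, x'⟫ - φ x' < ⟪y, x⟫ - φ x := by
  have := hφ.inner_gradient_lt_sub trivial trivial hx'.symm hdiff
  rw [hx, inner_sub_right] at this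
  linarith

theorem gradient_eq_of_isMinOn_sub_inner {x₀ y : E} (hdiff : DifferentiableAt ℝ φ x₀)
    (hmin : IsMinOn (fun x => φ x - ⟪y, x⟫) univ x₀) : ∇ φ x₀ = y := by
  have hzero := (hmin.isLocalMin univ_mem).hasFDerivAt_eq_zero
    (hdiff.hasFDerivAt.sub (innerSL ℝ y).hasFDerivAt)
  refine ext_inner_right ℝ fun v => ?_
  rw [inner_gradient_left, ← sub_eq_zero]
  simpa using congr($hzero v)

end Gradient

section Coercive

variable {E : Type*} [NormedAddCommGroup E] [InnerProductSpace ℝ E] [ProperSpace E]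
  {φ : E → ℝ}

theorem tendsto_sub_inner_cocompact_atTop
    (hcoer : Tendsto (fun x => φ x / ‖x‖) (cocompact E) atTop) (y : E) :
    Tendsto (fun x => φ x - ⟪y, x⟫) (cocompact E) atTop := by
  have hprod : Tendsto (fun x => ‖x‖ * (φ x / ‖x‖ - ‖y‖)) (cocompact E) atTop :=
    tendsto_norm_cocompact_atTop.atTop_mul_atTop₀ (hcoer.atTop_add tendsto_const_nhds)
  refine tendsto_atTop_mono' _ ?_ hprod
  filter_upwards [tendsto_norm_cocompact_atTop.eventually_gt_atTop 0] with x hx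
  calc ‖x‖ * (φ x / ‖x‖ - ‖y‖) = φ x - ‖y‖ * ‖x‖ := by field_simp
    _ ≤ φ x - ⟪y, x⟫ := by linarith [real_inner_le_norm y x]

theorem surjective_gradient_of_tendsto_div_norm (hdiff : Differentiable ℝ φ)
    (hcoer : Tendsto (fun x => φ x / ‖x‖) (cocompact E) atTop) : Surjective (∇ φ) := by
  intro y
  obtain ⟨x₀, hx₀⟩ := (hdiff.continuous.sub (innerSL ℝ y).continuous).exists_forall_le
    (tendsto_sub_inner_cocompact_atTop hcoer y)
  exact ⟨x₀, gradient_eq_of_isMinOn_sub_inner (hdiff x₀) fun x _ => hx₀ x⟩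

end Coercive

/-- **Legendre duality: bijectivity of the gradient map.**
For a differentiable, strictly convex and supercoercive potential `φ` on a
finite-dimensional real inner product space, the gradient map `∇φ : E → E` is a
bijection, and for every `y` the unique `x` with `∇φ x = y` is the unique maximizer of
`x ↦ ⟪y, x⟫ - φ x`. -/
theorem gradient_bijective_and_maximizer
    {E : Type*} [NormedAddCommGroup E] [InnerProductSpace ℝ E] [FiniteDimensional ℝ E]
    (φ : E → ℝ) (hdiff : Differentiable ℝ φ)
    (hconv : StrictConvexOn ℝ Set.univ φ)
    (hcoer : Filter.Tendsto (fun x => φ x / ‖x‖) (Filter.cocompact E) Filter.atTop) :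
    Function.Bijective (gradient φ) ∧
      ∀ y x : E, gradient φ x = y →
        ∀ x' : E, x' ≠ x → ⟪y, x'⟫ - φ x' < ⟪y, x⟫ - φ x :=
  ⟨⟨hconv.injective_gradient hdiff, surjective_gradient_of_tendsto_div_norm hdiff hcoer⟩,
    fun _ x hx _ hx' => hconv.inner_sub_lt_of_gradient_eq (hdiff x) hx hx'⟩
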